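/- arXiv:1102.3341 — 2 statements merged into one kernel-verified Lean document; each statement's English description precedes it below -/
import Mathlib

section
/- For preferences given by linear orders, with all linear orders admissible: a social choice function F : L(K)^N → K is truthfully implementable in dominant strategies (its direct mechanism g^F truthfully DOM-implements F) if and only if F is monotonic. -/
open scoped Classical

/-- A linear order relation on `K`.  Here `r x y` is read "`x <_i y`":
agent `i` ranks `y` at least as high as `x`.  It is reflexive,
total-and-antisymmetric and transitive. -/
def IsLin {K : Type} (r : K → K → Prop) : Prop :=
  (∀ x, r x x) ∧ (∀ x y, x ≠ y → (r x y ↔ ¬ r y x)) ∧ (∀ x y z, r x y → r y z → r x z)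

/-- The set `L(K)` of linear orders (preference relations) on `K`. -/
abbrev LinPref (K : Type) : Type := {r : K → K → Prop // IsLin r}

section GameForms

variable {N K : Type}

/-- `a` is a dominant strategy equilibrium of the strategic game form with action sets
`A` and outcome function `o`, under true preferences `pref`: for every player `i`,
every action `u i` of `i` and every tuple of actions of the other players,
`o(u₋ᵢ, uᵢ) <ᵢ o(u₋ᵢ, aᵢ)`. -/
def DomEquil (A : N → Type) (o : (∀ i, A i) → K) (pref : N → LinPref K)
    (a : ∀ i, A i) : Prop :=
  ∀ (i : N) (u : ∀ i, A i), (pref i).1 (o u) (o (Function.update u i (a i)))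

/-- The game form `(A, o)` DOM-implements `F`: for every profile the set of dominant
strategy equilibria is nonempty, and every dominant strategy equilibrium yields `F(<)`. -/
def DomImplements (A : N → Type) (o : (∀ i, A i) → K)
    (F : (N → LinPref K) → K) : Prop :=
  ∀ pr : N → LinPref K,
    (∃ a, DomEquil A o pr a) ∧ ∀ a, DomEquil A o pr a → o a = F pr

/-- The direct mechanism with outcome function `o` truthfully DOM-implements `F`:
for every true profile `<`, reporting `<` itself is a dominant strategy equilibrium
and yields `F(<)`. -/
def TruthfullyDomImplements (o F : (N → LinPref K) → K) : Prop :=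
  ∀ pr : N → LinPref K,
    DomEquil (fun _ => LinPref K) o pr pr ∧ o pr = F pr

/-- `a` is a Nash equilibrium of the game form `(A, o)` under preferences `pref`:
no player benefits from deviating unilaterally. -/
def NashEquil (A : N → Type) (o : (∀ i, A i) → K) (pref : N → LinPref K)
    (a : ∀ i, A i) : Prop :=
  ∀ (k : N) (a' : A k), (pref k).1 (o (Function.update a k a')) (o a)

/-- The direct mechanism with outcome function `o` NE-implements `F`. -/
def NEImplements (o F : (N → LinPref K) → K) : Prop :=
  ∀ pr : N → LinPref K,
    (∃ a, NashEquil (fun _ => LinPref K) o pr a) ∧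
      ∀ a, NashEquil (fun _ => LinPref K) o pr a → o a = F pr

/-- The direct mechanism with outcome function `o` truthfully NE-implements `F`. -/
def TruthfullyNEImplements (o F : (N → LinPref K) → K) : Prop :=
  ∀ pr : N → LinPref K,
    NashEquil (fun _ => LinPref K) o pr pr ∧ o pr = F pr

/-- Monotonicity of a social choice function `F`. -/
def Monotonic (F : (N → LinPref K) → K) : Prop :=
  ∀ (pr pr' : N → LinPref K) (x : K), F pr = x →
    (∀ (i : N) (y : K), (pr i).1 y x → (pr' i).1 y x) → F pr' = x

end GameForms

lemma exists_top_two {K : Type} [Fintype K] (a b : K) (hab : a ≠ b) :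
    ∃ r : LinPref K, (∀ x, r.1 x a) ∧ (∀ x, x ≠ a → r.1 x b) := by
  classical
  set n := Fintype.card K with hn
  set e := Fintype.equivFin K with he
  set w : K → ℕ := fun y => if y = a then n + 1 else if y = b then n else (e y : ℕ) with hw
  have hlt : ∀ y : K, ((e y : ℕ)) < n := fun y => (e y).2
  have hwa : w a = n + 1 := by simp [hw]
  have hwb : w b = n := by simp [hw, hab.symm]
  have hwo : ∀ y, y ≠ a → y ≠ b → w y = (e y : ℕ) := by
    intro y h1 h2; simp [hw, h1, h2]
  have hwinj : Function.Injective w := by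
    intro x y hxy
    by_cases hxa : x = a <;> by_cases hya : y = a
    · exact hxa.trans hya.symm
    · exfalso
      subst hxa
      by_cases hyb : y = b
      · subst hyb; rw [hwa, hwb] at hxy; omega
      · rw [hwa, hwo y hya hyb] at hxy; have := hlt y; omega
    · exfalso
      subst hya
      by_cases hxb : x = b
      · subst hxb; rw [hwa, hwb] at hxy; omega
      · rw [hwa, hwo x hxa hxb] at hxy; have := hlt x; omega
    · by_cases hxb : x = b <;> by_cases hyb : y = b
      · exact hxb.trans hyb.symm
      · exfalso; subst hxb; rw [hwb, hwo y hya hyb] at hxy; have := hlt y; omega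
      · exfalso; subst hyb; rw [hwb, hwo x hxa hxb] at hxy; have := hlt x; omega
      · rw [hwo x hxa hxb, hwo y hya hyb] at hxy
        exact e.injective (Fin.val_injective hxy)
  have hwle : ∀ y : K, w y ≤ n + 1 := by
    intro y
    by_cases hya : y = a
    · subst hya; omega
    · by_cases hyb : y = b
      · subst hyb; omega
      · rw [hwo y hya hyb]; have := hlt y; omega
  refine ⟨⟨fun x y => w x ≤ w y, ?_, ?_, ?_⟩, ?_, ?_⟩
  · intro x; exact le_refl _
  · intro x y hxy
    have : w x ≠ w y := fun h => hxy (hwinj h)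
    omega
  · intro x y z h1 h2; exact le_trans h1 h2
  · intro x
    show w x ≤ w a
    rw [hwa]; exact hwle x
  · intro x hxa
    show w x ≤ w b
    rw [hwb]
    by_cases hxb : x = b
    · subst hxb; omega
    · rw [hwo x hxa hxb]; exact le_of_lt (hlt x)

/-- For linear-order preferences with all linear orders admissible: a social choice
function is truthfully implementable in dominant strategies (its direct mechanism `g^F`,
whose outcome function is `F` itself, truthfully DOM-implements `F`) iff it is monotonic. -/
theorem truthfully_dom_implementable_iff_monotonic (N K : Type)
    [Fintype N] [Nonempty N] [Fintype K] (F : (N → LinPref K) → K) :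
    TruthfullyDomImplements F F ↔ Monotonic F := by
  classical
  constructor
  · -- truthful DOM implementation (strategy-proofness) implies monotonicity
    intro h pr pr' x hx hmono
    have key : ∀ S : Finset N, F (fun i => if i ∈ S then pr' i else pr i) = x := by
      intro S
      induction S using Finset.induction_on with
      | empty => simpa using hx
      | @insert a S haS ih =>
        set u : N → LinPref K := fun i => if i ∈ S then pr' i else pr i with hu
        have hins : (fun i => if i ∈ insert a S then pr' i else pr i)
            = Function.update u a (pr' a) := by
          funext i
          by_cases hia : i = a
          · subst hia; simp [hu]
          · simp [Function.update, hia, hu, Finset.mem_insert]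
        rw [hins]
        have hua : u a = pr a := by simp [hu, haS]
        set u' := Function.update u a (pr' a) with hu'
        have h1 : (pr a).1 (F u') x := by
          have h0 := (h pr).1 a u'
          rw [show Function.update u' a (pr a) = u by
            funext j
            rcases eq_or_ne j a with rfl | hja
            · rw [Function.update_self]; exact hua.symm
            · rw [Function.update_of_ne hja, hu', Function.update_of_ne hja]] at h0
          rwa [ih] at h0
        have h2 : (pr' a).1 x (F u') := by
          have h0 := (h pr').1 a u
          rwa [ih] at h0
        by_contra hne
        have h3 := hmono a (F u') h1
        have h4 := (pr' a).2.2.1 x (F u') (fun he => hne he.symm)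
        tauto
    have huniv : (fun i => if i ∈ (Finset.univ : Finset N) then pr' i else pr i) = pr' := by
      funext i; simp
    have := key Finset.univ
    rwa [huniv] at this
  · -- monotonicity implies strategy-proofness
    intro hmono pr
    refine ⟨?_, rfl⟩
    intro i u
    by_contra hne
    set a := F u with ha
    set b := F (Function.update u i (pr i)) with hb
    have hab : a ≠ b := fun he => hne (by rw [he]; exact (pr i).2.1 b)
    obtain ⟨r, hra, hrb⟩ := exists_top_two a b hab
    have h1 : F (Function.update u i r) = a := by
      refine hmono u _ a ha.symm ?_
      intro j y hy
      rcases eq_or_ne j i with hji | hji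
      · subst hji
        rw [Function.update_self]
        exact hra y
      · rwa [Function.update_of_ne hji]
    have h2 : F (Function.update u i r) = b := by
      have hstep : Function.update (Function.update u i (pr i)) i r
          = Function.update u i r := Function.update_idem ..
      have := hmono (Function.update u i (pr i)) (Function.update u i r) b hb.symm ?_
      · exact this
      · intro j y hy
        rcases eq_or_ne j i with hji | hji
        · subst hji
          rw [Function.update_self] at hy ⊢
          refine hrb y ?_
          intro hya
          subst hya
          exact hne hy
        · rwa [Function.update_of_ne hji] at hy ⊢
    exact hab (h1.symm.trans h2)
end

section
/- Revelation principle for dominant strategies (with linear-order preferences): if there exists a strategic game form g that DOM-implements the social choice function F, then F is truthfully DOM-implementable, i.e., the direct mechanism g^F truthfully DOM-implements F. -/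
open scoped Classical

/-- **Revelation principle for dominant strategies.** If some strategic game form
`(A, o)` DOM-implements the social choice function `F`, then `F` is truthfully
DOM-implementable: the direct mechanism `g^F` truthfully DOM-implements `F`. -/
theorem revelation_principle (N K : Type) [Fintype N] [Nonempty N] [Fintype K]
    (A : N → Type) [∀ i, Nonempty (A i)] [∀ i, Finite (A i)]
    (o : (∀ i, A i) → K) (F : (N → LinPref K) → K)
    (h : DomImplements A o F) :
    TruthfullyDomImplements F F := by
  intro pr
  refine ⟨?_, rfl⟩
  intro i u
  obtain ⟨a, ha⟩ := (h u).1
  set u' := Function.update u i (pr i) with hu'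
  obtain ⟨b, hb⟩ := (h u').1
  have hc : DomEquil A o u' (Function.update a i (b i)) := by
    intro j v
    by_cases hj : j = i
    · subst hj
      simpa [Function.update_self] using hb j v
    · have h1 : Function.update a i (b i) j = a j := Function.update_of_ne hj _ _
      have h2 : u' j = u j := Function.update_of_ne hj _ _
      rw [h1, h2]
      exact ha j v
  have hoc : o (Function.update a i (b i)) = F u' := (h u').2 _ hc
  have hoa : o a = F u := (h u).2 a ha
  have hkey := hb i a
  rw [hoc, hoa] at hkey
  simpa [hu', Function.update_self] using hkey
end
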